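/- arXiv:1902.08666 — 3 statements merged into one kernel-verified Lean document; each statement's English description precedes it below -/
import Mathlib

section
/- Let A and B be open learners from X to Y, and let i : P_A → P_B be a bijection witnessing an equivalence of open games F(A) ∼ F(B), i.e. i commutes with the play and coplay functions (I_B(i(p),x) = I_A(p,x) and r_B(i(p),x,y) = r_A(p,x,y) for all p, x, y), and for all h ∈ X and k : Y → Y, (p,p') ∈ B_{F(A)}(h,k) if and only if (i(p), i(p')) ∈ B_{F(B)}(h,k). Then i witnesses an equivalence of open learners A ∼ B; in particular, for all p ∈ P_A, x ∈ X, y ∈ Y, one has i(U_A(p, x, y)) = U_B(i(p), x, y). -/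
structure OpenLearner (X Y : Type) where
  P : Type
  I : P → X → Y
  U : P → X → Y → P
  r : P → X → Y → X

/-- The best response relation of the open game `F(A)` induced by an open
learner `A`, at context `(h, k)`:
`B_{F(A)}(h,k) = {(p, U_A(p, h, k(I_A(p, h)))) : p ∈ P_A}`. -/
def bestResponse {X Y : Type} (A : OpenLearner X Y) (h : X) (k : Y → Y) :
    Set (A.P × A.P) :=
  {pp : A.P × A.P | pp.2 = A.U pp.1 h (k (A.I pp.1 h))}

theorem mem_bestResponse_iff {X Y : Type} (A : OpenLearner X Y) (h : X) (k : Y → Y)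
    (p p' : A.P) : (p, p') ∈ bestResponse A h k ↔ p' = A.U p h (k (A.I p h)) :=
  Iff.rfl

/-- A constant continuation `k = fun _ => y` makes the best response at `(x, k)` read off
the update `U p x y` directly, so best responses determine the update function. -/
theorem mk_update_mem_bestResponse_const {X Y : Type} (A : OpenLearner X Y) (p : A.P)
    (x : X) (y : Y) : (p, A.U p x y) ∈ bestResponse A x (fun _ => y) :=
  (mem_bestResponse_iff A x _ p _).mpr rfl

theorem F_faithful_general {X Y : Type} (A B : OpenLearner X Y)
    (i : A.P → B.P)
    (hB : ∀ (h : X) (k : Y → Y) (p p' : A.P),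
      (p, p') ∈ bestResponse A h k ↔ (i p, i p') ∈ bestResponse B h k) :
    ∀ (p : A.P) (x : X) (y : Y), i (A.U p x y) = B.U (i p) x y := by
  intro p x y
  have hBest := (hB x (fun _ => y) p (A.U p x y)).mp (mk_update_mem_bestResponse_const A p x y)
  exact (mem_bestResponse_iff B x _ (i p) _).mp hBest

/-- `F` is faithful: if a bijection `i : P_A → P_B` witnesses an equivalence of
open games `F(A) ∼ F(B)` (it respects play, coplay, and best response), then it
witnesses an equivalence of open learners `A ∼ B`; in particular it respects
update: `i (U_A(p, x, y)) = U_B(i p, x, y)`. -/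
theorem F_faithful {X Y : Type} (A B : OpenLearner X Y)
    (i : A.P → B.P) (hi : Function.Bijective i)
    (hI : ∀ (p : A.P) (x : X), B.I (i p) x = A.I p x)
    (hr : ∀ (p : A.P) (x : X) (y : Y), B.r (i p) x y = A.r p x y)
    (hB : ∀ (h : X) (k : Y → Y) (p p' : A.P),
      (p, p') ∈ bestResponse A h k ↔ (i p, i p') ∈ bestResponse B h k) :
    ∀ (p : A.P) (x : X) (y : Y), i (A.U p x y) = B.U (i p) x y :=
  F_faithful_general A B i hB
end

section
/- Let A : X → Y and W : W → Z be open learners, and let A ⊗ B : X × W → Y × Z denote their monoidal product open learner, with parameter set P_A × P_B, implementation I_{A⊗B}((p,q),(x,w)) = (I_A(p,x), I_B(q,w)), and update U_{A⊗B}((p,q),(x,w),(y,z)) = (U_A(p,x,y), U_B(q,w,z)). Then for every (x, w) ∈ X × W and every k : Y × Z → Y × Z, the best response relation B_{F(A⊗B)}((x,w), k) equals the best response relation of the monoidal product open game F(A) ⊗ F(B); explicitly, ((p,q),(p',q')) ∈ B_{F(A⊗B)}((x,w), k) if and only if p' = U_A(p, x, y) and q' = U_B(q, w, z) where (y, z)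 = k(I_A(p, x), I_B(q, w)), and this coincides with the condition that (p,p') ∈ B_{F(A)}(x, k₁) and (q,q') ∈ B_{F(B)}(w, k₂), where k₁(y) = π₁(k(y, I_B(q, w))) and k₂(z) = π₂(k(I_A(p, x), z)). -/
/-- The monoidal product of open learners `A : X → Y` and `B : W → Z`. -/
def tensorLearner {X Y W Z : Type} (A : OpenLearner X Y) (B : OpenLearner W Z) :
    OpenLearner (X × W) (Y × Z) where
  P := A.P × B.P
  I := fun pq xw => (A.I pq.1 xw.1, B.I pq.2 xw.2)
  U := fun pq xw yz => (A.U pq.1 xw.1 yz.1, B.U pq.2 xw.2 yz.2)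
  r := fun pq xw yz => (A.r pq.1 xw.1 yz.1, B.r pq.2 xw.2 yz.2)

theorem mem_bestResponse_tensorLearner {X Y W Z : Type} (A : OpenLearner X Y)
    (B : OpenLearner W Z) (x : X) (w : W) (k : Y × Z → Y × Z) (p p' : A.P) (q q' : B.P) :
    ((p, q), (p', q')) ∈ bestResponse (tensorLearner A B) (x, w) k ↔
      p' = A.U p x (k (A.I p x, B.I q w)).1 ∧ q' = B.U q w (k (A.I p x, B.I q w)).2 :=
  Prod.ext_iff

/-- `F` is monoidal: the best response relation of `F(A ⊗ B)` coincides with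
that of the monoidal product open game `F(A) ⊗ F(B)`. -/
theorem F_tensor {X Y W Z : Type} (A : OpenLearner X Y) (B : OpenLearner W Z)
    (x : X) (w : W) (k : Y × Z → Y × Z) (p p' : A.P) (q q' : B.P) :
    (((p, q), (p', q')) ∈ bestResponse (tensorLearner A B) (x, w) k ↔
      (p' = A.U p x (k (A.I p x, B.I q w)).1 ∧
       q' = B.U q w (k (A.I p x, B.I q w)).2)) ∧
    (((p, q), (p', q')) ∈ bestResponse (tensorLearner A B) (x, w) k ↔
      ((p, p') ∈ bestResponse A x (fun y => (k (y, B.I q w)).1) ∧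
       (q, q') ∈ bestResponse B w (fun z => (k (A.I p x, z)).2))) :=
  -- Both right-hand sides unfold to the same pair of equations.
  ⟨mem_bestResponse_tensorLearner A B x w k p p' q q',
    mem_bestResponse_tensorLearner A B x w k p p' q q'⟩
end

section
/- Let σ_{X,W} : X × W → W × X be the symmetry open learner: its parameter set is a one-element set {∗}, its implementation is I(∗, (x,w)) = (w, x), its update is constant at ∗, and its request is r(∗, (x,w), (w',x')) = (x', w'). Then the induced open game F(σ_{X,W}) is the symmetry open game on ((X×W, X×W), (W×X, W×X)): its play function sends (∗, (x,w)) to (w,x), its coplay function sends (∗, (x,w), (w',x')) to (x',w'), and for every (x,w) ∈ X × W and every k : W × X → W × X, its best response relation satisfies B_{F(σ_{X,W})}((x,w), k) = {(∗, ∗)}. -/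
/-- The symmetry open learner `σ_{X,W} : X × W → W × X`. -/
def symLearner (X W : Type) : OpenLearner (X × W) (W × X) where
  P := PUnit
  I := fun _ xw => (xw.2, xw.1)
  U := fun _ _ _ => PUnit.unit
  r := fun _ _ wx => (wx.2, wx.1)

theorem bestResponse_eq_singleton_of_subsingleton {X Y : Type} (A : OpenLearner X Y)
    [Subsingleton A.P] (p : A.P) (h : X) (k : Y → Y) :
    bestResponse A h k = {(p, p)} :=
  Set.ext fun _ => iff_of_true (Subsingleton.elim _ _)
    (Prod.ext (Subsingleton.elim _ _) (Subsingleton.elim _ _))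

/-- `F` takes the symmetry open learner to the symmetry open game on
`((X×W, X×W), (W×X, W×X))`: play sends `(∗, (x, w))` to `(w, x)`, coplay sends
`(∗, (x, w), (w', x'))` to `(x', w')`, and best response is constantly
`{(∗, ∗)}`. -/
theorem F_symm (X W : Type) :
    (∀ (s : (symLearner X W).P) (x : X) (w : W),
      (symLearner X W).I s (x, w) = (w, x)) ∧
    (∀ (s : (symLearner X W).P) (x : X) (w : W) (w' : W) (x' : X),
      (symLearner X W).r s (x, w) (w', x') = (x', w')) ∧
    (∀ (xw : X × W) (k : W × X → W × X),
      bestResponse (symLearner X W) xw k = {(PUnit.unit, PUnit.unit)}) := by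
  have : Subsingleton (symLearner X W).P := inferInstanceAs (Subsingleton PUnit)
  exact ⟨fun _ _ _ => rfl, fun _ _ _ _ _ => rfl,
    bestResponse_eq_singleton_of_subsingleton (symLearner X W) PUnit.unit⟩
end
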